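/- arXiv:1406.5399 — 2 statements merged into one kernel-verified Lean document; each statement's English description precedes it below -/
import Mathlib

section
/- The comultiplication maps M' satisfy coassociativity: (M'_{i,j} ⊗ id_{W_k}) ∘ M'_{i+j,k} = (id_{W_i} ⊗ M'_{j,k}) ∘ M'_{i,j+k} as maps W_{i+j+k} → W_i ⊗ W_j ⊗ W_k. -/
open Matrix
open scoped Kronecker

noncomputable section

/-- The quantum integer `[n] = (q^n - q^{-n})/(q - q⁻¹)`. -/
def qint {K : Type*} [Field K] (q : K) (n : ℤ) : K :=
  (q ^ n - q ^ (-n)) / (q - q⁻¹)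

/-- The quantum factorial `[n]! = [n][n-1]⋯[1]`. -/
def qfact {K : Type*} [Field K] (q : K) : ℕ → K
  | 0 => 1
  | n + 1 => qint q (n + 1) * qfact q n

/-- The quantum binomial coefficient `[n choose k] = [n]!/([k]![n-k]!)` (zero if `k > n`). -/
def qbinom {K : Type*} [Field K] (q : K) (n k : ℕ) : K :=
  if k ≤ n then qfact q n / (qfact q k * qfact q (n - k)) else 0

/-- The matrix of the multiplication map `M_{k,l} : W_k ⊗ W_l → W_{k+l}` in the
bases `(u, x)` (index `0 = u = v∧w^{i-1}`, `1 = x = w^i`):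
`M(x_k⊗x_l) = x_{k+l}`, `M(u_k⊗x_l) = u_{k+l}`, `M(x_k⊗u_l) = (-q)^k u_{k+l}`,
`M(u_k⊗u_l) = 0`. -/
def Mmat {K : Type*} [Field K] (q : K) (k : ℕ) : Matrix (Fin 2) (Fin 2 × Fin 2) K :=
  Matrix.single 0 (0, 1) 1 + Matrix.single 0 (1, 0) ((-q) ^ k) +
    Matrix.single 1 (1, 1) 1

/-- The matrix of the comultiplication map `M'_{k,l} : W_{k+l} → W_k ⊗ W_l`:
`M'(x_{k+l}) = [k+l choose k] x_k⊗x_l`,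
`M'(u_{k+l}) = q^{-l}[k+l-1 choose l] u_k⊗x_l + (-1)^k [k+l-1 choose k] x_k⊗u_l`. -/
def M'mat {K : Type*} [Field K] (q : K) (k l : ℕ) : Matrix (Fin 2 × Fin 2) (Fin 2) K :=
  Matrix.single (0, 1) 0 (q ^ (-(l : ℤ)) * qbinom q (k + l - 1) l) +
    Matrix.single (1, 0) 0 ((-1 : K) ^ k * qbinom q (k + l - 1) k) +
    Matrix.single (1, 1) 1 (qbinom q (k + l) k)

/-- The matrix of the `R`-matrix on `C_q^{1|1} ⊗ C_q^{1|1}` in the basis `(v, w)`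
(index `0 = v`, `1 = w`): `R(v⊗v) = q v⊗v`, `R(v⊗w) = (q-q⁻¹) v⊗w + w⊗v`,
`R(w⊗v) = v⊗w`, `R(w⊗w) = -q⁻¹ w⊗w`. -/
def Rmat {K : Type*} [Field K] (q : K) : Matrix (Fin 2 × Fin 2) (Fin 2 × Fin 2) K :=
  Matrix.single (0, 0) (0, 0) q + Matrix.single (0, 1) (0, 1) (q - q⁻¹) +
    Matrix.single (1, 0) (0, 1) 1 + Matrix.single (0, 1) (1, 0) 1 +
    Matrix.single (1, 1) (1, 1) (-q⁻¹)

/-!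
Comparing coefficients on the basis vectors, coassociativity on `x` and on the three components
`u⊗x⊗x`, `x⊗u⊗x`, `x⊗x⊗u` of the image of `u` reduces, after matching the powers of `q` and the
signs, to the q-trinomial identity
`[a+b choose a][a+b+c choose a+b] = [b+c choose b][a+b+c choose a] = [a+b+c]!/([a]![b]![c]!)`
for suitable `a, b, c`, together with the symmetry `[a+b choose a] = [a+b choose b]`.
-/

section QBinomial

variable {K : Type*} [Field K] (q : K)

lemma qfact_eq_zero_of_le {m n : ℕ} (hmn : m ≤ n) (hm : qfact q m = 0) : qfact q n = 0 := by
  induction n, hmn using Nat.le_induction with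
  | base => exact hm
  | succ n _ ih => rw [qfact, ih, mul_zero]

lemma qbinom_add_left (a b : ℕ) :
    qbinom q (a + b) a = qfact q (a + b) / (qfact q a * qfact q b) := by
  rw [qbinom, if_pos (Nat.le_add_right a b), Nat.add_sub_cancel_left]

lemma qbinom_symm_add (a b : ℕ) : qbinom q (a + b) a = qbinom q (a + b) b := by
  rw [qbinom_add_left, add_comm a b, qbinom_add_left, mul_comm]

lemma qbinom_mul_qbinom (a b c : ℕ) :
    qbinom q (a + b) a * qbinom q (a + b + c) (a + b) =
      qfact q (a + b + c) / (qfact q a * qfact q b * qfact q c) := by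
  rw [qbinom_add_left, qbinom_add_left]
  -- if `[a+b]! = 0` then also `[a+b+c]! = 0`, and both sides are `0`
  by_cases h : qfact q (a + b) = 0
  · simp [h, qfact_eq_zero_of_le q (Nat.le_add_right (a + b) c) h]
  · field_simp

lemma qbinom_mul_qbinom_assoc (a b c : ℕ) :
    qbinom q (a + b) a * qbinom q (a + b + c) (a + b) =
      qbinom q (b + c) b * qbinom q (a + (b + c)) a := by
  rw [qbinom_symm_add q a (b + c), add_comm a (b + c), qbinom_mul_qbinom, qbinom_mul_qbinom]
  ring_nf

lemma qbinom_mul_qbinom_assoc_right (a b c : ℕ) :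
    qbinom q (a + b) a * qbinom q (a + b + c) c =
      qbinom q (b + c) c * qbinom q (a + (b + c)) a := by
  rw [← qbinom_symm_add q (a + b), ← qbinom_symm_add q b, qbinom_mul_qbinom_assoc]

lemma qbinom_mul_qbinom_assoc_left (a b c : ℕ) :
    qbinom q (a + b) b * qbinom q (a + b + c) c =
      qbinom q (b + c) b * qbinom q (a + (b + c)) (b + c) := by
  rw [← qbinom_symm_add q a b, ← qbinom_symm_add q (a + b), ← qbinom_symm_add q a,
    qbinom_mul_qbinom_assoc]

end QBinomial

theorem M'_coassoc_general {K : Type*} [Field K] (q : K)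
    (i j k : ℕ) (hi : 1 ≤ i) (hj : 1 ≤ j) (hk : 1 ≤ k) :
    (M'mat q i j ⊗ₖ (1 : Matrix (Fin 2) (Fin 2) K)) * M'mat q (i + j) k =
      ((((1 : Matrix (Fin 2) (Fin 2) K) ⊗ₖ M'mat q j k) * M'mat q i (j + k)).submatrix
        (Equiv.prodAssoc (Fin 2) (Fin 2) (Fin 2)) id) := by
  obtain ⟨i, rfl⟩ : ∃ a, i = a + 1 := ⟨i - 1, by omega⟩
  obtain ⟨j, rfl⟩ : ∃ b, j = b + 1 := ⟨j - 1, by omega⟩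
  obtain ⟨k, rfl⟩ : ∃ c, k = c + 1 := ⟨k - 1, by omega⟩
  simp only [M'mat, _root_.zpow_neg, zpow_natCast]
  ext ⟨⟨a, b⟩, c⟩ d
  fin_cases a <;> fin_cases b <;> fin_cases c <;> fin_cases d <;>
    simp [Matrix.mul_apply, Matrix.one_apply, Matrix.single_apply, Fintype.sum_prod_type]
  -- the entries at `(u⊗x⊗x, u)`, `(x⊗u⊗x, u)`, `(x⊗x⊗u, u)` and `(x⊗x⊗x, x)`
  · linear_combination (norm := ring_nf)
      (q ^ (j + 1))⁻¹ * (q ^ (k + 1))⁻¹ * qbinom_mul_qbinom_assoc_left q i (j + 1) (k + 1)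
  · linear_combination (norm := ring_nf)
      (-1) ^ (i + 1) * (q ^ (k + 1))⁻¹ * qbinom_mul_qbinom_assoc_right q (i + 1) j (k + 1)
  · linear_combination (norm := ring_nf) (-1) ^ (i + j) * qbinom_mul_qbinom_assoc q (i + 1) (j + 1) k
  · linear_combination (norm := ring_nf) qbinom_mul_qbinom_assoc q (i + 1) (j + 1) (k + 1)

/-- Coassociativity of the comultiplication maps:
`(M'_{i,j} ⊗ id) ∘ M'_{i+j,k} = (id ⊗ M'_{j,k}) ∘ M'_{i,j+k}` as maps
`W_{i+j+k} → W_i ⊗ W_j ⊗ W_k`. -/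
theorem M'_coassoc {K : Type*} [Field K] (q : K) (hq : q ≠ 0)
    (hq' : q - q⁻¹ ≠ 0) (i j k : ℕ) (hi : 1 ≤ i) (hj : 1 ≤ j) (hk : 1 ≤ k) :
    (M'mat q i j ⊗ₖ (1 : Matrix (Fin 2) (Fin 2) K)) * M'mat q (i + j) k =
      ((((1 : Matrix (Fin 2) (Fin 2) K) ⊗ₖ M'mat q j k) * M'mat q i (j + k)).submatrix
        (Equiv.prodAssoc (Fin 2) (Fin 2) (Fin 2)) id) :=
  M'_coassoc_general q i j k hi hj hk
end
end

section
/- For the operator F^{(l)} = M_{1,l} ∘ (projection) acting on hook basis vectors, one has F^{(l)}(w_+^a ∧ w_-^b) = [a choose l]_q w_+^{a-l} ∧ w_-^{b+l} and F^{(l)}(w_+^a ∧ v_- ∧ w_-^{b-1}) = (-q)^l [a choose l]_q w_+^{a-l} ∧ v_- ∧ w_-^{b+l-1}, consistent with the composite M_{l,b} ∘ M'_{a-l,l}, i.e., (id ⊗ M_{l,b}) ∘ (M'_{a-l,l} ⊗ id) sends x_a⊗x_b ↦ [a choose l]_q x_{a-l}⊗x_{b+l} and x_a⊗u_b ↦ (-q)^l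 [a choose l]_q x_{a-l}⊗u_{b+l}. -/
open Matrix
open scoped Kronecker

noncomputable section

/-- The F-rung map of thickness `r` from `W_a ⊗ W_b` to `W_{a-r} ⊗ W_{b+r}`:
`f_r = (id ⊗ M_{r,b}) ∘ (M'_{a-r,r} ⊗ id)`. -/
def Frung {K : Type*} [Field K] (q : K) (a b r : ℕ) :
    Matrix (Fin 2 × Fin 2) (Fin 2 × Fin 2) K :=
  ((1 : Matrix (Fin 2) (Fin 2) K) ⊗ₖ Mmat q r) *
    ((M'mat q (a - r) r ⊗ₖ (1 : Matrix (Fin 2) (Fin 2) K)).submatrix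
      (Equiv.prodAssoc (Fin 2) (Fin 2) (Fin 2)).symm id)

/-- The E-rung map of thickness `r` from `W_a ⊗ W_b` to `W_{a+r} ⊗ W_{b-r}`:
`e_r = (M_{a,r} ⊗ id) ∘ (id ⊗ M'_{r,b-r})`. -/
def Erung {K : Type*} [Field K] (q : K) (a b r : ℕ) :
    Matrix (Fin 2 × Fin 2) (Fin 2 × Fin 2) K :=
  (Mmat q a ⊗ₖ (1 : Matrix (Fin 2) (Fin 2) K)) *
    (((1 : Matrix (Fin 2) (Fin 2) K) ⊗ₖ M'mat q r (b - r)).submatrix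
      (Equiv.prodAssoc (Fin 2) (Fin 2) (Fin 2)) id)


theorem qbinom_symm {K : Type*} [Field K] (q : K) {a l : ℕ} (hla : l ≤ a) :
    qbinom q a (a - l) = qbinom q a l := by
  unfold qbinom
  rw [if_pos (Nat.sub_le a l), if_pos hla, Nat.sub_sub_self hla, mul_comm]

/-- The divided power `F^{(l)}` acting on hook basis vectors, as the composite
`(id ⊗ M_{l,b}) ∘ (M'_{a-l,l} ⊗ id)`: it sends `x_a⊗x_b ↦ [a choose l] x_{a-l}⊗x_{b+l}`
and `x_a⊗u_b ↦ (-q)^l [a choose l] x_{a-l}⊗u_{b+l}`. -/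
theorem divided_power_action {K : Type*} [Field K] (q : K) (hq : q ≠ 0)
    (hq' : q - q⁻¹ ≠ 0) (a b l : ℕ) (hl : 1 ≤ l) (hla : l ≤ a) (hb : 1 ≤ b) :
    Frung q a b l *ᵥ (Pi.single ((1 : Fin 2), (1 : Fin 2)) (1 : K)) =
        qbinom q a l • (Pi.single ((1 : Fin 2), (1 : Fin 2)) (1 : K) : Fin 2 × Fin 2 → K) ∧
      Frung q a b l *ᵥ (Pi.single ((1 : Fin 2), (0 : Fin 2)) (1 : K)) =
        ((-q) ^ l * qbinom q a l) •
          (Pi.single ((1 : Fin 2), (0 : Fin 2)) (1 : K) : Fin 2 × Fin 2 → K) := by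
  have hsub : a - l + l = a := Nat.sub_add_cancel hla
  constructor <;> funext i <;>
    simp [Frung, Mmat, M'mat, Matrix.mulVec, Matrix.mul_apply, Matrix.submatrix_apply,
      dotProduct, Fintype.sum_prod_type, Fin.sum_univ_two, Matrix.kroneckerMap_apply,
      Matrix.one_apply, Matrix.single, Pi.single_apply, Prod.ext_iff,
      Equiv.prodAssoc, hsub, qbinom_symm q hla] <;>
    fin_cases i <;> simp [mul_comm]
end
end
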